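/- (Edge-length barrier, Theorem 3.) Assume the framework setup and suppose D < (1/9)(8/3 + √μ̄·√(μ̄ + 8/3) − μ̄). Define η₃ = (L/2)(√(μ̄ + 8/3) − √μ̄) and, for η > 0, e_min(η) = √((|ω|/κ)² + (2/3)(λ/κ)η²(1 − (3/2)η₁/η)) − |ω|/κ. Then: (i) η₃ > (3/2)η₁; (ii) every q ∈ 𝒞^p with (3/2)η₁ < |q − p| ≤ η₃ satisfies |e(q) − e(p)| ≥ e_min(|q − p|); (iii) for every continuous path q : [0,1] → 𝒞^p with q(0) = p whose endpoint q(1) has the same edge lengths as p (|q(1)_i − q(1)_j| = |p_i − p_j| for every edge) and satisfies |q(1) − p| > (3/2)η₁, there exists t ∈ [0,1] with |e(q(t)) − e(p)| ≥ e_min(η₃). -/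

import Mathlib

noncomputable section
open scoped BigOperators InnerProductSpace Classical

/-- Configuration space of `n` points in `ℝ^d`, with the Euclidean norm on `ℝ^{dn}`. -/
abbrev Config (n d : ℕ) := PiLp 2 (fun _ : Fin n => EuclideanSpace ℝ (Fin d))

/-- The rigidity operator `R(q)` applied to `u`: the `k`-th entry, for edge `k = (i,j)`,
is `⟨q_i - q_j, u_i - u_j⟩`. -/
def rig {n d m : ℕ} (E : Fin m → Fin n × Fin n) (q u : Config n d) :
    EuclideanSpace ℝ (Fin m) :=
  WithLp.toLp 2 (fun k => ⟪q (E k).1 - q (E k).2, u (E k).1 - u (E k).2⟫_ℝ)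

/-- The stress form `Ω_ω(v) = Σ_{(i,j)∈E} ω_{ij} |v_i - v_j|²`. -/
def stressForm {n d m : ℕ} (E : Fin m → Fin n × Fin n)
    (ω : EuclideanSpace ℝ (Fin m)) (v : Config n d) : ℝ :=
  ∑ k, ω k * ‖v (E k).1 - v (E k).2‖ ^ 2

/-- The vector `ωᵀ R(p) ∈ ℝ^{dn}` whose `l`-th block is `Σ_{j : (l,j)∈E} ω_{lj} (p_l - p_j)`. -/
def stressGrad {n d m : ℕ} (E : Fin m → Fin n × Fin n)
    (ω : EuclideanSpace ℝ (Fin m)) (p : Config n d) : Config n d :=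
  WithLp.toLp 2 (fun l => ∑ k, (((if (E k).1 = l then (1:ℝ) else 0) - (if (E k).2 = l then (1:ℝ) else 0)) * ω k) •
    (p (E k).1 - p (E k).2))

/-- The vector `e(q) ∈ ℝ^m` of squared edge lengths. -/
def esq {n d m : ℕ} (E : Fin m → Fin n × Fin n) (q : Config n d) :
    EuclideanSpace ℝ (Fin m) :=
  WithLp.toLp 2 (fun k => ‖q (E k).1 - q (E k).2‖ ^ 2)

/-- `z` bounds the number of edges incident to each vertex (`z ≥` the maximum adjacency). -/
def degBound {n m : ℕ} (E : Fin m → Fin n × Fin n) (z : ℝ) : Prop :=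
  ∀ l : Fin n, ((Finset.univ.filter (fun k => (E k).1 = l ∨ (E k).2 = l)).card : ℝ) ≤ z

/-!
Write `q = p + v` with `v ∈ 𝒞`. The change of squared edge lengths is `f = 2 R(p) v + e(v)` with
`|e(v)| ≤ 2 √z |v|²`, and pairing with the stress gives `⟨ω, f⟩ = Ω_ω(v) + 2 ⟨ωᵀR(p), v⟩`. Hence
`κ |f|² + 2 |ω| |f|` is at least `4κ r² - 8κ √z |v|² r + 2 Ω_ω(v) - λ η₁ |v|`, where `r = |R(p) v|`.
Bounding `Ω_ω(v)` by a convex combination of the two coercivity hypotheses, with weight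
`β = |v| / (2 L √μ̄)`, and completing the square in `r` leaves `(2/3) λ |v|² - λ η₁ |v|` as long
as `|v| ≤ η₃`; solving this quadratic inequality for `|f|` gives `e_min(|v|)`. The endpoint of a
path as in (iii) has `e(q(1)) = e(p)`, so it lies beyond `η₃`, and the intermediate value theorem
yields a time where `|q(t) - p| = η₃`.
-/

lemma mul_norm_sq_le_of_forall_norm_eq_one {F : Type*} [NormedAddCommGroup F] [NormedSpace ℝ F]
    {C : Submodule ℝ F} {g : F → ℝ} (hg : ∀ (c : ℝ) v, g (c • v) = c ^ 2 * g v) {a : ℝ}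
    (h : ∀ v ∈ C, ‖v‖ = 1 → a ≤ g v) {v : F} (hv : v ∈ C) : a * ‖v‖ ^ 2 ≤ g v := by
  rcases eq_or_ne v 0 with rfl | hv0
  · simp [show g 0 = 0 by simpa using hg 0 0]
  have hunit := h (‖v‖⁻¹ • v) (C.smul_mem _ hv) (norm_smul_inv_norm hv0)
  rw [hg] at hunit
  have hn : 0 < ‖v‖ := norm_pos_iff.mpr hv0
  calc a * ‖v‖ ^ 2 ≤ ‖v‖⁻¹ ^ 2 * g v * ‖v‖ ^ 2 := by gcongr
    _ = g v := by field_simp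

lemma barrier_inequality {lam κ s L w η r S : ℝ} (hκ : 0 ≤ κ) (hL : 0 < L) (hw : 0 < w)
    (hη : 0 < η) (hηw : η ≤ 2 * L * w) (hwη : w * η ≤ 2 / 3 * L)
    (hlam : lam = 8 * s ^ 2 * κ * L ^ 2) (h₁ : lam * η ^ 2 ≤ 2 * κ * r ^ 2 + S)
    (h₂ : lam * (1 - w ^ 2) * η ^ 2 ≤ S) :
    2 / 3 * lam * η ^ 2 ≤ 4 * κ * r ^ 2 - 8 * κ * s * η ^ 2 * r + 2 * S := by
  -- the optimal weight: both error terms then equal `lam * w * η ^ 3 / L`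
  set β := η / (2 * L * w) with hβ
  have hβ0 : 0 < β := by positivity
  have hβ1 : β ≤ 1 := (div_le_one (by positivity)).mpr hηw
  have hS : 2 * (1 - β) * (lam * η ^ 2 - 2 * κ * r ^ 2) + 2 * β * (lam * (1 - w ^ 2) * η ^ 2)
      ≤ 2 * S := by
    linarith [mul_le_mul_of_nonneg_left h₁ (by linarith : 0 ≤ 2 * (1 - β)),
      mul_le_mul_of_nonneg_left h₂ (by linarith : 0 ≤ 2 * β)]
  have hsq : 0 ≤ 4 * κ * (β * r - s * η ^ 2) ^ 2 / β := by positivity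
  have hexp : 4 * κ * (β * r - s * η ^ 2) ^ 2 / β
      = 4 * β * κ * r ^ 2 - 8 * κ * s * η ^ 2 * r + lam * w * η ^ 3 / L := by
    rw [hβ, hlam]; field_simp; ring
  have hβw : 2 * β * (lam * w ^ 2 * η ^ 2) = lam * w * η ^ 3 / L := by
    rw [hβ]; field_simp
  have hlam0 : 0 ≤ lam := by rw [hlam]; positivity
  have hcubic : 2 * (lam * w * η ^ 3 / L) ≤ 4 / 3 * lam * η ^ 2 := by
    rw [mul_div_assoc', div_le_iff₀ hL]
    linarith [mul_le_mul_of_nonneg_left hwη (by positivity : 0 ≤ lam * η ^ 2)]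
  linarith

lemma sqrt_sq_add_sub_le {a κ t X : ℝ} (hκ : 0 < κ) (ha : 0 ≤ a) (ht : 0 ≤ t)
    (h : κ * X ≤ κ * t ^ 2 + 2 * a * t) : √((a / κ) ^ 2 + X) - a / κ ≤ t := by
  rw [sub_le_iff_le_add, Real.sqrt_le_left (by positivity)]
  have hX : X ≤ (κ * t ^ 2 + 2 * a * t) / κ := by rw [le_div_iff₀ hκ]; linarith
  calc (a / κ) ^ 2 + X ≤ (a / κ) ^ 2 + (κ * t ^ 2 + 2 * a * t) / κ := by gcongr
    _ = (t + a / κ) ^ 2 := by field_simp; ring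

lemma sqrt_sq_add_sub_pos {a c η η₁ : ℝ} (ha : 0 ≤ a) (hc : 0 < c) (hη₁ : 0 ≤ η₁)
    (hη : 3 / 2 * η₁ < η) : 0 < √(a ^ 2 + c * η ^ 2 * (1 - 3 / 2 * η₁ / η)) - a := by
  have hη0 : 0 < η := by linarith
  have hfac : 0 < 1 - 3 / 2 * η₁ / η := by rw [sub_pos, div_lt_one hη0]; exact hη
  exact sub_pos.2 ((Real.lt_sqrt ha).2 (by nlinarith [mul_pos (mul_pos hc (pow_pos hη0 2)) hfac]))

lemma exists_mem_Icc_norm_sub_eq {F : Type*} [SeminormedAddCommGroup F] {q : ℝ → F} {p : F}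
    {r : ℝ} (hq : ContinuousOn q (Set.Icc 0 1)) (h₀ : ‖q 0 - p‖ ≤ r) (h₁ : r ≤ ‖q 1 - p‖) :
    ∃ t ∈ Set.Icc (0 : ℝ) 1, ‖q t - p‖ = r :=
  intermediate_value_Icc zero_le_one (hq.sub continuousOn_const).norm ⟨h₀, h₁⟩

section Framework

variable {n d m : ℕ} (E : Fin m → Fin n × Fin n)

lemma esq_add_sub_esq (p v : Config n d) :
    esq E (p + v) - esq E p = (2 : ℝ) • rig E p v + esq E v := by
  ext k
  simp only [esq, rig, PiLp.sub_apply, PiLp.add_apply, PiLp.smul_apply, smul_eq_mul,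
    add_sub_add_comm, norm_add_sq_real]
  ring

lemma inner_stressGrad (ω : EuclideanSpace ℝ (Fin m)) (p v : Config n d) :
    ⟪stressGrad E ω p, v⟫_ℝ = ⟪ω, rig E p v⟫_ℝ := by
  rw [PiLp.inner_apply, PiLp.inner_apply]
  simp only [stressGrad, rig, sum_inner, real_inner_smul_left]
  rw [Finset.sum_comm]
  refine Finset.sum_congr rfl fun k _ => ?_
  simp only [sub_mul, one_mul, zero_mul, ite_mul, Finset.sum_sub_distrib, Finset.sum_ite_eq,
    Finset.mem_univ, if_true, inner_sub_right, RCLike.inner_apply, conj_trivial]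
  ring

lemma stressForm_eq_inner_esq (ω : EuclideanSpace ℝ (Fin m)) (v : Config n d) :
    stressForm E ω v = ⟪ω, esq E v⟫_ℝ := by
  simp only [stressForm, esq, PiLp.inner_apply, RCLike.inner_apply, conj_trivial, mul_comm]

lemma rig_smul (p : Config n d) (c : ℝ) (v : Config n d) :
    rig E p (c • v) = c • rig E p v := by
  ext k
  simp only [rig, PiLp.smul_apply, ← smul_sub, real_inner_smul_right, smul_eq_mul]

lemma stressForm_smul (ω : EuclideanSpace ℝ (Fin m)) (c : ℝ) (v : Config n d) :
    stressForm E ω (c • v) = c ^ 2 * stressForm E ω v := by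
  simp only [stressForm, PiLp.smul_apply, ← smul_sub, norm_smul, mul_pow, Real.norm_eq_abs,
    sq_abs, Finset.mul_sum]
  exact Finset.sum_congr rfl fun k _ => by ring

variable {E}

lemma sum_norm_sq_incident_le (hE : ∀ k, (E k).1 ≠ (E k).2) {z : ℝ} (hdeg : degBound E z)
    (v : Config n d) :
    ∑ k, (‖v (E k).1‖ ^ 2 + ‖v (E k).2‖ ^ 2) ≤ z * ‖v‖ ^ 2 := by
  have incident (k : Fin m) : ‖v (E k).1‖ ^ 2 + ‖v (E k).2‖ ^ 2
      = ∑ l, if (E k).1 = l ∨ (E k).2 = l then ‖v l‖ ^ 2 else 0 := by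
    rw [← Finset.sum_filter]
    have : Finset.univ.filter (fun l => (E k).1 = l ∨ (E k).2 = l) = {(E k).1, (E k).2} := by
      ext l; simp [eq_comm]
    rw [this, Finset.sum_pair (hE k)]
  calc ∑ k, (‖v (E k).1‖ ^ 2 + ‖v (E k).2‖ ^ 2)
      = ∑ l, ((Finset.univ.filter fun k => (E k).1 = l ∨ (E k).2 = l).card : ℝ) * ‖v l‖ ^ 2 := by
        rw [Finset.sum_congr rfl fun k _ => incident k, Finset.sum_comm]
        refine Finset.sum_congr rfl fun l _ => ?_
        rw [← Finset.sum_filter, Finset.sum_const, nsmul_eq_mul]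
    _ ≤ ∑ l, z * ‖v l‖ ^ 2 :=
        Finset.sum_le_sum fun l _ => mul_le_mul_of_nonneg_right (hdeg l) (sq_nonneg _)
    _ = z * ‖v‖ ^ 2 := by rw [PiLp.norm_sq_eq_of_L2, Finset.mul_sum]

lemma norm_esq_le (hE : ∀ k, (E k).1 ≠ (E k).2) {z : ℝ} (hz : 0 ≤ z) (hdeg : degBound E z)
    (v : Config n d) :
    ‖esq E v‖ ≤ 2 * √z * ‖v‖ ^ 2 := by
  have edge_le (k : Fin m) :
      ‖v (E k).1 - v (E k).2‖ ^ 2 ≤ 2 * (‖v (E k).1‖ ^ 2 + ‖v (E k).2‖ ^ 2) :=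
    (pow_le_pow_left₀ (norm_nonneg _) (norm_sub_le _ _) 2).trans add_sq_le
  have pair_le (k : Fin m) : ‖v (E k).1‖ ^ 2 + ‖v (E k).2‖ ^ 2 ≤ ‖v‖ ^ 2 := by
    rw [← Finset.sum_pair (f := fun l => ‖v l‖ ^ 2) (hE k), PiLp.norm_sq_eq_of_L2 _ v]
    exact Finset.sum_le_sum_of_subset_of_nonneg (Finset.subset_univ _) fun l _ _ => sq_nonneg _
  have hsq : ‖esq E v‖ ^ 2 ≤ (2 * √z * ‖v‖ ^ 2) ^ 2 := calc
    ‖esq E v‖ ^ 2 = ∑ k, ‖v (E k).1 - v (E k).2‖ ^ 2 * ‖v (E k).1 - v (E k).2‖ ^ 2 := by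
        simp [esq, EuclideanSpace.norm_sq_eq, ← pow_two]
    _ ≤ ∑ k, 2 * ‖v‖ ^ 2 * (2 * (‖v (E k).1‖ ^ 2 + ‖v (E k).2‖ ^ 2)) :=
        Finset.sum_le_sum fun k _ => mul_le_mul ((edge_le k).trans (by linarith [pair_le k]))
          (edge_le k) (sq_nonneg _) (by positivity)
    _ ≤ 2 * ‖v‖ ^ 2 * (2 * (z * ‖v‖ ^ 2)) := by
        rw [← Finset.mul_sum, ← Finset.mul_sum]
        gcongr
        exact sum_norm_sq_incident_le hE hdeg v
    _ = (2 * √z * ‖v‖ ^ 2) ^ 2 := by rw [mul_pow, mul_pow, Real.sq_sqrt hz]; ring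
  exact (pow_le_pow_iff_left₀ (norm_nonneg _) (by positivity) two_ne_zero).mp hsq

end Framework

def barrierRadius (L μ : ℝ) : ℝ := L / 2 * (√(μ + 8 / 3) - √μ)

lemma lt_barrierRadius {L μ η₁ : ℝ} (hL : 0 < L) (hμ : 0 ≤ μ)
    (hD : η₁ / L * (√μ + η₁ / L) < 1 / 9 * (8 / 3 + √μ * √(μ + 8 / 3) - μ)) :
    3 / 2 * η₁ < barrierRadius L μ := by
  set x := η₁ / L
  set y := (√(μ + 8 / 3) - √μ) / 3
  have hy : 0 ≤ y := by
    have := Real.sqrt_le_sqrt (by linarith : μ ≤ μ + 8 / 3); simp only [y]; linarith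
  have hy' : y * (√μ + y) = 1 / 9 * (8 / 3 + √μ * √(μ + 8 / 3) - μ) := by
    simp only [y]; nlinarith [Real.sq_sqrt hμ, Real.sq_sqrt (by linarith : 0 ≤ μ + 8 / 3)]
  have hxy : x < y := by
    by_contra! h
    nlinarith [Real.sqrt_nonneg μ]
  have hx : η₁ = x * L := by simp only [x]; field_simp
  have h3y : √(μ + 8 / 3) - √μ = 3 * y := by simp only [y]; ring
  rw [barrierRadius, h3y, hx]
  nlinarith [mul_lt_mul_of_pos_right hxy hL]

lemma sqrt_mul_barrierRadius_le {L μ : ℝ} (hL : 0 ≤ L) (hμ : 0 ≤ μ) :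
    √μ * barrierRadius L μ ≤ 2 / 3 * L := by
  have := two_mul_le_add_sq (√μ) (√(μ + 8 / 3))
  rw [Real.sq_sqrt hμ, Real.sq_sqrt (by linarith)] at this
  rw [barrierRadius]
  nlinarith [Real.sq_sqrt hμ]

lemma barrierRadius_le {L μ : ℝ} (hL : 0 ≤ L) (hμ : 1 / 9 ≤ μ) :
    barrierRadius L μ ≤ 2 * L * √μ := by
  have : √(μ + 8 / 3) ≤ 5 * √μ := by
    rw [Real.sqrt_le_left (by positivity), mul_pow, Real.sq_sqrt (by linarith)]; linarith
  rw [barrierRadius]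
  nlinarith [Real.sqrt_nonneg μ]

lemma esq_sub_lower_bound {n d m : ℕ} {E : Fin m → Fin n × Fin n} (hE : ∀ k, (E k).1 ≠ (E k).2)
    {z : ℝ} (hz : 0 ≤ z) (hdeg : degBound E z) {p : Config n d} {C : Submodule ℝ (Config n d)}
    {κ lam μ₀ μ L : ℝ} {ω : EuclideanSpace ℝ (Fin m)} (hκ : 0 < κ)
    (hlower : ∀ v ∈ C, ‖v‖ = 1 → lam ≤ 2 * κ * ‖rig E p v‖ ^ 2 + stressForm E ω v)
    (hμlower : ∀ v ∈ C, ‖v‖ = 1 → μ₀ ≤ stressForm E ω v)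
    (hL : 0 < L) (hlam : lam = 8 * z * κ * L ^ 2) (hμ : 1 / 9 ≤ μ) (hμ₀ : μ₀ = lam * (1 - μ))
    {v : Config n d} (hv : v ∈ C) (hv0 : 0 < ‖v‖) (hvη : ‖v‖ ≤ barrierRadius L μ) :
    2 / 3 * lam * ‖v‖ ^ 2 - 4 * ‖stressGrad E ω p‖ * ‖v‖
      ≤ κ * ‖esq E (p + v) - esq E p‖ ^ 2 + 2 * ‖ω‖ * ‖esq E (p + v) - esq E p‖ := by
  set f := esq E (p + v) - esq E p
  set r := ‖rig E p v‖
  have hf : f = (2 : ℝ) • rig E p v + esq E v := esq_add_sub_esq E p v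
  have hA : lam * ‖v‖ ^ 2 ≤ 2 * κ * r ^ 2 + stressForm E ω v := by
    refine mul_norm_sq_le_of_forall_norm_eq_one (fun c u => ?_) hlower hv
    simp only [rig_smul, stressForm_smul, norm_smul, Real.norm_eq_abs, mul_pow, sq_abs]
    ring
  have hB : μ₀ * ‖v‖ ^ 2 ≤ stressForm E ω v :=
    mul_norm_sq_le_of_forall_norm_eq_one (stressForm_smul E ω) hμlower hv
  have hw : 0 < √μ := Real.sqrt_pos.mpr (by linarith)
  have hcore := barrier_inequality (s := √z) hκ.le hL hw hv0
    (hvη.trans (barrierRadius_le hL.le hμ))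
    ((mul_le_mul_of_nonneg_left hvη hw.le).trans (sqrt_mul_barrierRadius_le hL.le (by linarith)))
    (by rw [Real.sq_sqrt hz, hlam]) hA (by rwa [Real.sq_sqrt (by linarith), ← hμ₀])
  have hrig : 4 * r ^ 2 - 4 * r * ‖esq E v‖ ≤ ‖f‖ ^ 2 := by
    rw [hf, norm_add_sq_real, real_inner_smul_left, norm_smul, Real.norm_two]
    linarith [neg_le_of_abs_le (abs_real_inner_le_norm (rig E p v) (esq E v)),
      sq_nonneg ‖esq E v‖]
  have hstress : 2 * stressForm E ω v - 4 * ‖stressGrad E ω p‖ * ‖v‖ ≤ 2 * ‖ω‖ * ‖f‖ := by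
    have hω : ⟪ω, f⟫_ℝ = stressForm E ω v + 2 * ⟪stressGrad E ω p, v⟫_ℝ := by
      rw [hf, inner_add_right, real_inner_smul_right, inner_stressGrad, stressForm_eq_inner_esq]
      ring
    have := neg_le_of_abs_le (abs_real_inner_le_norm (stressGrad E ω p) v)
    linarith [real_inner_le_norm ω f]
  have hesq := mul_le_mul_of_nonneg_left (norm_esq_le hE hz hdeg v)
    (by positivity : 0 ≤ 4 * κ * r)
  linarith [mul_le_mul_of_nonneg_left hrig hκ.le]

theorem edge_length_barrier_general {n d m : ℕ} (E : Fin m → Fin n × Fin n)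
    (hE : ∀ k, (E k).1 ≠ (E k).2)
    (p : Config n d) (C : Submodule ℝ (Config n d))
    (z κ lam μ₀ : ℝ) (ω : EuclideanSpace ℝ (Fin m))
    (hz : 1 ≤ z) (hdeg : degBound E z)
    (hκ : 0 < κ) (hlam : 0 < lam) (hμ₀ : μ₀ ≤ lam / 2)
    (hlower : ∀ v ∈ C, ‖v‖ = 1 → lam ≤ 2 * κ * ‖rig E p v‖ ^ 2 + stressForm E ω v)
    (hμlower : ∀ v ∈ C, ‖v‖ = 1 → μ₀ ≤ stressForm E ω v)
    (L μbar η₁ D η₃ : ℝ) (emin : ℝ → ℝ)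
    (hL : L = Real.sqrt (lam / (8 * z * κ)))
    (hμbar : μbar = 1 - μ₀ / lam)
    (hη₁ : η₁ = 4 * ‖stressGrad E ω p‖ / lam)
    (hD : D = (η₁ / L) * (Real.sqrt μbar + η₁ / L))
    (hDlt : D < (1 / 9) * (8 / 3 + Real.sqrt μbar * Real.sqrt (μbar + 8 / 3) - μbar))
    (hη₃ : η₃ = (L / 2) * (Real.sqrt (μbar + 8 / 3) - Real.sqrt μbar))
    (hemin : ∀ η : ℝ, emin η =
      Real.sqrt ((‖ω‖ / κ) ^ 2 + (2 / 3) * (lam / κ) * η ^ 2 * (1 - (3 / 2) * η₁ / η))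
        - ‖ω‖ / κ) :
    ((3 / 2) * η₁ < η₃) ∧
    (∀ q : Config n d, q - p ∈ C → (3 / 2) * η₁ < ‖q - p‖ → ‖q - p‖ ≤ η₃ →
      emin ‖q - p‖ ≤ ‖esq E q - esq E p‖) ∧
    (∀ q : ℝ → Config n d, ContinuousOn q (Set.Icc 0 1) → q 0 = p →
      (∀ t ∈ Set.Icc (0:ℝ) 1, q t - p ∈ C) →
      (∀ k, ‖q 1 (E k).1 - q 1 (E k).2‖ = ‖p (E k).1 - p (E k).2‖) →
      (3 / 2) * η₁ < ‖q 1 - p‖ →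
      ∃ t ∈ Set.Icc (0:ℝ) 1, emin η₃ ≤ ‖esq E (q t) - esq E p‖) := by
  have hη₁0 : 0 ≤ η₁ := by rw [hη₁]; positivity
  have h8zκ : 0 < 8 * z * κ := by positivity
  have hL0 : 0 < L := by rw [hL]; exact Real.sqrt_pos.mpr (div_pos hlam h8zκ)
  have hlamL : lam = 8 * z * κ * L ^ 2 := by rw [hL, Real.sq_sqrt (div_pos hlam h8zκ).le]; field_simp
  have hμ : 1 / 2 ≤ μbar := by
    have : μ₀ / lam ≤ 1 / 2 := by rw [div_le_iff₀ hlam]; linarith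
    linarith
  have hμ₀eq : μ₀ = lam * (1 - μbar) := by rw [hμbar]; field_simp; ring
  have hemin_pos (η : ℝ) (h : 3 / 2 * η₁ < η) : 0 < emin η := by
    rw [hemin]; exact sqrt_sq_add_sub_pos (by positivity) (by positivity) hη₁0 h
  have part1 : 3 / 2 * η₁ < η₃ := hη₃ ▸ lt_barrierRadius hL0 (by linarith) (hD ▸ hDlt)
  have part2 (q : Config n d) (hq : q - p ∈ C) (hfar : 3 / 2 * η₁ < ‖q - p‖)
      (hnear : ‖q - p‖ ≤ η₃) : emin ‖q - p‖ ≤ ‖esq E q - esq E p‖ := by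
    have hη : 0 < ‖q - p‖ := by linarith
    have key := esq_sub_lower_bound hE (by linarith) hdeg hκ hlower hμlower hL0 hlamL
      (by linarith) hμ₀eq hq hη (hnear.trans_eq hη₃)
    rw [add_sub_cancel] at key
    rw [hemin]
    refine sqrt_sq_add_sub_le hκ (norm_nonneg _) (norm_nonneg _) (le_of_eq_of_le ?_ key)
    rw [hη₁]; field_simp
  refine ⟨part1, part2, fun q hq hq0 hqC hlen hfar => ?_⟩
  have hrigid : esq E (q 1) = esq E p := by ext k; simp only [esq, hlen k]
  have hbeyond : η₃ < ‖q 1 - p‖ := by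
    by_contra! h
    have := part2 (q 1) (hqC 1 ⟨zero_le_one, le_rfl⟩) hfar h
    rw [hrigid, sub_self, norm_zero] at this
    exact this.not_gt (hemin_pos _ hfar)
  obtain ⟨t, ht, hqt⟩ := exists_mem_Icc_norm_sub_eq hq
    (by rw [hq0, sub_self, norm_zero]; linarith) hbeyond.le
  exact ⟨t, ht, hqt ▸ part2 (q t) (hqC t ht) (hqt ▸ part1) hqt.le⟩

/-- **Theorem 3 (Edge-length barrier).** Under the framework setup with
`D < (1/9)(8/3 + √μ̄·√(μ̄+8/3) − μ̄)`: (i) `η₃ > (3/2)η₁`; (ii) any `q ∈ 𝒞^p` with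
`(3/2)η₁ < |q−p| ≤ η₃` has `|e(q)−e(p)| ≥ e_min(|q−p|)`; (iii) any continuous path in `𝒞^p`
from `p` to a configuration with the same edge lengths lying outside the `(3/2)η₁`-ball passes
through a point where the squared edge lengths have changed by at least `e_min(η₃)`. -/
theorem edge_length_barrier {n d m : ℕ} (E : Fin m → Fin n × Fin n) (hm : 0 < m)
    (hE : ∀ k, (E k).1 ≠ (E k).2)
    (p : Config n d) (C : Submodule ℝ (Config n d))
    (z κ lam μ₀ : ℝ) (ω : EuclideanSpace ℝ (Fin m))
    (hz : 1 ≤ z) (hdeg : degBound E z)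
    (hκ : 0 < κ) (hlam : 0 < lam) (hμ₀ : μ₀ ≤ lam / 2)
    (hlower : ∀ v ∈ C, ‖v‖ = 1 → lam ≤ 2 * κ * ‖rig E p v‖ ^ 2 + stressForm E ω v)
    (hμlower : ∀ v ∈ C, ‖v‖ = 1 → μ₀ ≤ stressForm E ω v)
    (L μbar η₁ D η₃ : ℝ) (emin : ℝ → ℝ)
    (hL : L = Real.sqrt (lam / (8 * z * κ)))
    (hμbar : μbar = 1 - μ₀ / lam)
    (hη₁ : η₁ = 4 * ‖stressGrad E ω p‖ / lam)
    (hD : D = (η₁ / L) * (Real.sqrt μbar + η₁ / L))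
    (hDlt : D < (1 / 9) * (8 / 3 + Real.sqrt μbar * Real.sqrt (μbar + 8 / 3) - μbar))
    (hη₃ : η₃ = (L / 2) * (Real.sqrt (μbar + 8 / 3) - Real.sqrt μbar))
    (hemin : ∀ η : ℝ, emin η =
      Real.sqrt ((‖ω‖ / κ) ^ 2 + (2 / 3) * (lam / κ) * η ^ 2 * (1 - (3 / 2) * η₁ / η))
        - ‖ω‖ / κ) :
    ((3 / 2) * η₁ < η₃) ∧
    (∀ q : Config n d, q - p ∈ C → (3 / 2) * η₁ < ‖q - p‖ → ‖q - p‖ ≤ η₃ →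
      emin ‖q - p‖ ≤ ‖esq E q - esq E p‖) ∧
    (∀ q : ℝ → Config n d, ContinuousOn q (Set.Icc 0 1) → q 0 = p →
      (∀ t ∈ Set.Icc (0:ℝ) 1, q t - p ∈ C) →
      (∀ k, ‖q 1 (E k).1 - q 1 (E k).2‖ = ‖p (E k).1 - p (E k).2‖) →
      (3 / 2) * η₁ < ‖q 1 - p‖ →
      ∃ t ∈ Set.Icc (0:ℝ) 1, emin η₃ ≤ ‖esq E (q t) - esq E p‖) :=
  edge_length_barrier_general E hE p C z κ lam μ₀ ω hz hdeg hκ hlam hμ₀ hlower hμlower L μbar η₁ D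
    η₃ emin hL hμbar hη₁ hD hDlt hη₃ hemin
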